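/- arXiv:0802.3442 — 3 statements merged into one kernel-verified Lean document; each statement's English description precedes it below -/
import Mathlib

section
/- Let d ≥ 1 and let L ⊆ ℂ^d × ℂ^d be the set of pairs (F, F') with P F = 0, Q F' = 0, and C F' = Λ C F, where P, Q are orthogonal projections on ℂ^d with P Q = 0, C = I − P − Q, and Λ is a self-adjoint operator on the range of C. Then L is a subspace of dimension d, and the form ⟨F', G⟩ − ⟨F, G'⟩ vanishes for all (F,F'), (G,G') in L. -/
/-!
The subspace is the image of the injective map `x ↦ ((1 - P) x, (P + Λ) x)`. A solution
`(F, F')` is the image of `x = F + P F'`, because with `C = 1 - P - Q`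
we have `F' = P F' + Q F' + C F' = P F' + Λ F`.
Injectivity gives dimension `d`, and the form vanishes on the image because
`(P + Λ)ᴴ (1 - P) = Λ = (1 - P)ᴴ (P + Λ)`.
-/

open Matrix

namespace Matrix

variable {n R : Type*} [Fintype n] [CommRing R]

theorem IsHermitian.mul_eq_zero_comm [StarRing R] {P Q : Matrix n n R} (hP : P.IsHermitian)
    (hQ : Q.IsHermitian) (h : P * Q = 0) : Q * P = 0 := by
  simpa [hP.eq, hQ.eq] using congrArg (·ᴴ) h

theorem star_mulVec_dotProduct_mulVec [StarRing R] (M N : Matrix n n R) (v w : n → R) :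
    star (M *ᵥ v) ⬝ᵥ N *ᵥ w = star v ⬝ᵥ (Mᴴ * N) *ᵥ w := by
  rw [star_mulVec, ← dotProduct_mulVec, mulVec_mulVec]

variable [DecidableEq n]

def vertexConditionParam (P Λ : Matrix n n R) : (n → R) →ₗ[R] (n → R) × (n → R) :=
  (1 - P).mulVecLin.prod (P + Λ).mulVecLin

@[simp]
theorem vertexConditionParam_apply (P Λ : Matrix n n R) (x : n → R) :
    vertexConditionParam P Λ x = ((1 - P) *ᵥ x, (P + Λ) *ᵥ x) := rfl

theorem vertexConditionParam_injective {P Λ : Matrix n n R} (hΛP : Λ * P = 0) :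
    Function.Injective (vertexConditionParam P Λ) := by
  rw [← LinearMap.ker_eq_bot, LinearMap.ker_eq_bot']
  intro x hx
  simp only [vertexConditionParam_apply, Prod.mk_eq_zero] at hx
  obtain ⟨h₁, h₂⟩ := hx
  have hPx : P *ᵥ x = x := by
    rwa [sub_mulVec, one_mulVec, sub_eq_zero, eq_comm] at h₁
  have hΛx : Λ *ᵥ x = 0 := by rw [← hPx, mulVec_mulVec, hΛP, zero_mulVec]
  rwa [add_mulVec, hΛx, add_zero, hPx] at h₂

theorem mem_range_vertexConditionParam_iff {P Q Λ : Matrix n n R} (hPP : P * P = P)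
    (hQP : Q * P = 0) (hQΛ : Q * Λ = 0) (hΛP : Λ * P = 0) (hΛC : Λ * (1 - P - Q) = Λ)
    (hCΛ : (1 - P - Q) * Λ = Λ) (p : (n → R) × (n → R)) :
    p ∈ LinearMap.range (vertexConditionParam P Λ) ↔
      P *ᵥ p.1 = 0 ∧ Q *ᵥ p.2 = 0 ∧ (1 - P - Q) *ᵥ p.2 = Λ *ᵥ (1 - P - Q) *ᵥ p.1 := by
  obtain ⟨F, F'⟩ := p
  constructor
  · rintro ⟨x, hx⟩
    simp only [vertexConditionParam_apply, Prod.mk.injEq] at hx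
    obtain ⟨rfl, rfl⟩ := hx
    have h₁ : P * (1 - P) = 0 := by simp [mul_sub, hPP]
    have h₂ : Q * (P + Λ) = 0 := by simp [mul_add, hQP, hQΛ]
    have h₃ : (1 - P - Q) * (P + Λ) = Λ := by
      rw [mul_add, hCΛ]; simp [sub_mul, hPP, hQP]
    have h₄ : Λ * ((1 - P - Q) * (1 - P)) = Λ := by rw [← mul_assoc, hΛC, mul_sub, hΛP]; simp
    simp only [mulVec_mulVec, h₁, h₂, h₃, h₄, zero_mulVec, and_self]
  · rintro ⟨h₁, h₂, h₃⟩
    refine ⟨F + P *ᵥ F', ?_⟩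
    have hF' : F' = Λ *ᵥ F + P *ᵥ F' := by
      have := congrArg (· *ᵥ F') (show P + Q + (1 - P - Q) = 1 by abel)
      simp only [add_mulVec, one_mulVec, h₂, h₃, mulVec_mulVec, hΛC, add_zero] at this
      rw [add_comm] at this
      exact this.symm
    simp only [vertexConditionParam_apply, Prod.mk.injEq, mulVec_add, mulVec_mulVec, sub_mul,
      add_mul, hPP, hΛP]
    constructor
    · simp [sub_mulVec, h₁]
    · simp [add_mulVec, h₁, ← hF']

theorem vertexConditionParam_isotropic [StarRing R] {P Λ : Matrix n n R} (hP : P.IsHermitian)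
    (hΛ : Λ.IsHermitian) (hPP : P * P = P) (hΛP : Λ * P = 0) (x y : n → R) :
    star (vertexConditionParam P Λ x).2 ⬝ᵥ (vertexConditionParam P Λ y).1
      = star (vertexConditionParam P Λ x).1 ⬝ᵥ (vertexConditionParam P Λ y).2 := by
  have hPΛ : P * Λ = 0 := hΛ.mul_eq_zero_comm hP hΛP
  have h₁ : (P + Λ)ᴴ * (1 - P) = Λ := by
    simp [hP.eq, hΛ.eq, mul_sub, add_mul, hPP, hΛP]
  have h₂ : (1 - P)ᴴ * (P + Λ) = Λ := by
    simp [hP.eq, sub_mul, mul_add, hPP, hPΛ]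
  simp only [vertexConditionParam_apply, star_mulVec_dotProduct_mulVec, h₁, h₂]

end Matrix

theorem stmt_3_general (d : ℕ) (P Q Λ : Matrix (Fin d) (Fin d) ℂ)
    (hP : P.IsHermitian) (hPP : P * P = P)
    (hQ : Q.IsHermitian) (hQQ : Q * Q = Q)
    (hPQ : P * Q = 0)
    (hΛ : Λ.IsHermitian)
    (hΛC : Λ * (1 - P - Q) = Λ) (hCΛ : (1 - P - Q) * Λ = Λ) :
    ∃ S : Submodule ℂ ((Fin d → ℂ) × (Fin d → ℂ)),
      (↑S : Set ((Fin d → ℂ) × (Fin d → ℂ)))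
          = {p | P.mulVec p.1 = 0 ∧ Q.mulVec p.2 = 0 ∧
              (1 - P - Q).mulVec p.2 = Λ.mulVec ((1 - P - Q).mulVec p.1)} ∧
        Module.finrank ℂ S = d ∧
        ∀ p ∈ S, ∀ q ∈ S,
          dotProduct (star (Prod.snd p)) (Prod.fst q)
            = dotProduct (star (Prod.fst p)) (Prod.snd q) := by
  have hQP : Q * P = 0 := hP.mul_eq_zero_comm hQ hPQ
  have hΛP : Λ * P = 0 := by
    rw [← hΛC, mul_assoc, sub_mul, sub_mul, hPP, hQP]; simp
  have hQΛ : Q * Λ = 0 := by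
    rw [← hCΛ, ← mul_assoc, mul_sub, mul_sub, hQQ, hQP]; simp
  refine ⟨LinearMap.range (vertexConditionParam P Λ), ?_, ?_, ?_⟩
  · ext p
    exact mem_range_vertexConditionParam_iff hPP hQP hQΛ hΛP hΛC hCΛ p
  · rw [LinearMap.finrank_range_of_inj (vertexConditionParam_injective hΛP)]
    simp
  · rintro p ⟨x, rfl⟩ q ⟨y, rfl⟩
    exact vertexConditionParam_isotropic hP hΛ hPP hΛP x y

/-- Form (C) of self-adjoint vertex conditions: the set of (F, F') with P F = 0, Q F' = 0,
C F' = Λ C F (C = I − P − Q) is a Lagrangian subspace of ℂ^d × ℂ^d of dimension d. -/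
theorem stmt_3 (d : ℕ) (hd : 1 ≤ d) (P Q Λ : Matrix (Fin d) (Fin d) ℂ)
    (hP : P.IsHermitian) (hPP : P * P = P)
    (hQ : Q.IsHermitian) (hQQ : Q * Q = Q)
    (hPQ : P * Q = 0)
    (hΛ : Λ.IsHermitian)
    (hΛC : Λ * (1 - P - Q) = Λ) (hCΛ : (1 - P - Q) * Λ = Λ) :
    ∃ S : Submodule ℂ ((Fin d → ℂ) × (Fin d → ℂ)),
      (↑S : Set ((Fin d → ℂ) × (Fin d → ℂ)))
          = {p | P.mulVec p.1 = 0 ∧ Q.mulVec p.2 = 0 ∧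
              (1 - P - Q).mulVec p.2 = Λ.mulVec ((1 - P - Q).mulVec p.1)} ∧
        Module.finrank ℂ S = d ∧
        ∀ p ∈ S, ∀ q ∈ S,
          dotProduct (star (Prod.snd p)) (Prod.fst q)
            = dotProduct (star (Prod.fst p)) (Prod.snd q) :=
  stmt_3_general d P Q Λ hP hPP hQ hQQ hPQ hΛ hΛC hCΛ
end

section
/- Let λ > 0 with sin(√λ l) ≠ 0 for the common edge length l. Suppose f solves −f'' = λ f on every edge of a finite metric graph with all edge lengths equal to l, f is continuous at vertices, and satisfies the Kirchhoff condition at every vertex. Then the vertex values F(v) = f(v) satisfy the difference equation Σ_{w ~ v} F(w) = d_v cos(√λ l) F(v) at each vertex v, where the sum is over neighbors w counted with edge multiplicity and d_v is the degree of v. -/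
/-!
On an edge, the Wronskian of `f` with `sin (√λ (l - x))`, resp. `sin (√λ x)`, is constant;
evaluating it at both ends gives `sin (√λ l) f'(0) = √λ (f(l) - cos (√λ l) f(0))` and
`sin (√λ l) f'(l) = √λ (cos (√λ l) f(l) - f(0))`. Multiplying Kirchhoff's condition at `v`
by `sin (√λ l)` and substituting these turns it into `√λ` times the difference equation
at `v`.
-/

open Set Finset

theorem wronskian_eq_of_deriv_deriv_eq {g h h' : ℝ → ℂ} {a b : ℝ} {k : ℂ} (hab : a ≤ b)
    (hg : ContDiff ℝ 2 g) (hode : ∀ x ∈ Icc a b, deriv (deriv g) x = k * g x)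
    (hh : ∀ x, HasDerivAt h (h' x) x) (hh' : ∀ x, HasDerivAt h' (k * h x) x) :
    g b * h' b - deriv g b * h b = g a * h' a - deriv g a * h a := by
  have hg' : ContDiff ℝ 1 (deriv g) := hg.iterate_deriv' 1 1
  have hgd : Differentiable ℝ g := hg.differentiable (by norm_num)
  have hgd' : Differentiable ℝ (deriv g) := hg'.differentiable one_ne_zero
  have hhc : Continuous h := continuous_iff_continuousAt.2 fun x => (hh x).continuousAt
  have hhc' : Continuous h' := continuous_iff_continuousAt.2 fun x => (hh' x).continuousAt
  have hcont : ContinuousOn (fun x => g x * h' x - deriv g x * h x) (Icc a b) :=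
    ((hgd.continuous.mul hhc').sub (hgd'.continuous.mul hhc)).continuousOn
  refine constant_of_has_deriv_right_zero hcont (fun x hx => ?_) b (right_mem_Icc.2 hab)
  have hW := ((hgd x).hasDerivAt.mul (hh' x)).sub ((hgd' x).hasDerivAt.mul (hh x))
  rw [hode x (Ico_subset_Icc_self hx)] at hW
  exact (hW.congr_deriv (by ring)).hasDerivWithinAt

theorem hasDerivAt_ofReal_sin_mul_add (a b x : ℝ) :
    HasDerivAt (fun y : ℝ => (Real.sin (a * y + b) : ℂ)) (a * Real.cos (a * x + b)) x := by
  have := ((Real.hasDerivAt_sin _).comp x (((hasDerivAt_id x).const_mul a).add_const b)).ofReal_comp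
  exact this.congr_deriv (by simp only [id, mul_one]; push_cast; ring)

theorem hasDerivAt_ofReal_cos_mul_add (a b x : ℝ) :
    HasDerivAt (fun y : ℝ => (a * Real.cos (a * y + b) : ℂ))
      (-(a : ℂ) ^ 2 * Real.sin (a * x + b)) x := by
  have := (((Real.hasDerivAt_cos _).comp x
    (((hasDerivAt_id x).const_mul a).add_const b)).ofReal_comp).const_mul (a : ℂ)
  exact this.congr_deriv (by simp only [id, mul_one]; push_cast; ring)

section EndpointDerivatives

variable {g : ℝ → ℂ} {ω l : ℝ}

theorem sin_mul_deriv_zero_eq (hl : 0 ≤ l) (hg : ContDiff ℝ 2 g)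
    (hode : ∀ x ∈ Icc 0 l, deriv (deriv g) x = -(ω : ℂ) ^ 2 * g x) :
    Real.sin (ω * l) * deriv g 0 = ω * (g l - Real.cos (ω * l) * g 0) := by
  have hW := wronskian_eq_of_deriv_deriv_eq hl hg
    (fun x hx => by rw [Complex.ofReal_neg, neg_sq]; exact hode x hx)
    (hasDerivAt_ofReal_sin_mul_add (-ω) (ω * l)) (hasDerivAt_ofReal_cos_mul_add (-ω) (ω * l))
  simp only [neg_mul, neg_add_cancel, mul_zero, zero_add, Real.sin_zero, Real.cos_zero] at hW
  push_cast at hW ⊢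
  linear_combination hW

theorem sin_mul_deriv_right_eq (hl : 0 ≤ l) (hg : ContDiff ℝ 2 g)
    (hode : ∀ x ∈ Icc 0 l, deriv (deriv g) x = -(ω : ℂ) ^ 2 * g x) :
    Real.sin (ω * l) * deriv g l = ω * (Real.cos (ω * l) * g l - g 0) := by
  have hW := wronskian_eq_of_deriv_deriv_eq hl hg hode
    (hasDerivAt_ofReal_sin_mul_add ω 0) (hasDerivAt_ofReal_cos_mul_add ω 0)
  simp only [add_zero, mul_zero, Real.sin_zero, Real.cos_zero] at hW
  push_cast at hW ⊢
  linear_combination -hW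

end EndpointDerivatives

theorem stmt_11_general {V E : Type*} [Fintype V] [Fintype E] [DecidableEq V]
    (ends : E → V × V) (l lam : ℝ) (hl : 0 < l) (hlam : 0 < lam)
    (f : E → ℝ → ℂ) (F : V → ℂ)
    (hsm : ∀ e, ContDiff ℝ 2 (f e))
    (hode : ∀ e, ∀ x ∈ Set.Icc (0:ℝ) l, deriv (deriv (f e)) x = -(lam : ℂ) * f e x)
    (hv0 : ∀ e, f e 0 = F (ends e).1) (hvl : ∀ e, f e l = F (ends e).2)
    (hkir : ∀ v : V,
      (∑ e ∈ Finset.univ.filter (fun e => (ends e).1 = v), deriv (f e) 0)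
        - (∑ e ∈ Finset.univ.filter (fun e => (ends e).2 = v), deriv (f e) l) = 0) :
    ∀ v : V,
      (∑ e ∈ Finset.univ.filter (fun e => (ends e).1 = v), F (ends e).2)
        + (∑ e ∈ Finset.univ.filter (fun e => (ends e).2 = v), F (ends e).1)
      = ((((Finset.univ.filter (fun e => (ends e).1 = v)).card
            + (Finset.univ.filter (fun e => (ends e).2 = v)).card : ℕ) : ℂ))
          * ((Real.cos (Real.sqrt lam * l) : ℝ) : ℂ) * F v := by
  intro v
  set ω := Real.sqrt lam
  have hω : (ω : ℂ) ≠ 0 := Complex.ofReal_ne_zero.2 (Real.sqrt_pos.2 hlam).ne'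
  have hode' : ∀ e, ∀ x ∈ Icc 0 l, deriv (deriv (f e)) x = -(ω : ℂ) ^ 2 * f e x := by
    simpa only [← Complex.ofReal_pow, Real.sq_sqrt hlam.le, ω] using hode
  have hout : ∀ e ∈ univ.filter (fun e => (ends e).1 = v),
      Real.sin (ω * l) * deriv (f e) 0 = ω * (F (ends e).2 - Real.cos (ω * l) * F v) := by
    intro e he
    rw [sin_mul_deriv_zero_eq hl.le (hsm e) (hode' e), hv0, hvl, (mem_filter.1 he).2]
  have hin : ∀ e ∈ univ.filter (fun e => (ends e).2 = v),
      Real.sin (ω * l) * deriv (f e) l = ω * (Real.cos (ω * l) * F v - F (ends e).1) := by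
    intro e he
    rw [sin_mul_deriv_right_eq hl.le (hsm e) (hode' e), hv0, hvl, (mem_filter.1 he).2]
  have hkir' := congrArg ((Real.sin (ω * l) : ℂ) * ·) (hkir v)
  simp only [mul_sub, mul_sum, sum_congr rfl hout, sum_congr rfl hin, sum_sub_distrib,
    sum_const, nsmul_eq_mul, mul_zero] at hkir'
  refine sub_eq_zero.1 ((mul_eq_zero.1 ?_).resolve_left hω)
  rw [← mul_sum, ← mul_sum] at hkir'
  rw [Nat.cast_add]
  linear_combination hkir'

/-- On an equilateral finite metric graph, solutions of −f'' = λf with continuity and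
Kirchhoff conditions have vertex values satisfying Σ_{w ~ v} F(w) = d_v cos(√λ l) F(v). -/
theorem stmt_11 {V E : Type*} [Fintype V] [Fintype E] [DecidableEq V]
    (ends : E → V × V) (l lam : ℝ) (hl : 0 < l) (hlam : 0 < lam)
    (hs : Real.sin (Real.sqrt lam * l) ≠ 0)
    (f : E → ℝ → ℂ) (F : V → ℂ)
    (hsm : ∀ e, ContDiff ℝ 2 (f e))
    (hode : ∀ e, ∀ x ∈ Set.Icc (0:ℝ) l, deriv (deriv (f e)) x = -(lam : ℂ) * f e x)
    (hv0 : ∀ e, f e 0 = F (ends e).1) (hvl : ∀ e, f e l = F (ends e).2)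
    (hkir : ∀ v : V,
      (∑ e ∈ Finset.univ.filter (fun e => (ends e).1 = v), deriv (f e) 0)
        - (∑ e ∈ Finset.univ.filter (fun e => (ends e).2 = v), deriv (f e) l) = 0) :
    ∀ v : V,
      (∑ e ∈ Finset.univ.filter (fun e => (ends e).1 = v), F (ends e).2)
        + (∑ e ∈ Finset.univ.filter (fun e => (ends e).2 = v), F (ends e).1)
      = ((((Finset.univ.filter (fun e => (ends e).1 = v)).card
            + (Finset.univ.filter (fun e => (ends e).2 = v)).card : ℕ) : ℂ))
          * ((Real.cos (Real.sqrt lam * l) : ℝ) : ℂ) * F v :=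
  stmt_11_general ends l lam hl hlam f F hsm hode hv0 hvl hkir
end

section
/- Conversely, let Γ be a finite metric graph with all edges of length l, let λ > 0 with sin(√λ l) ≠ 0, and suppose F : V → ℂ is a nonzero function on the vertices satisfying Σ_{w ~ v} F(w) = d_v cos(√λ l) F(v) at every vertex v. Define f on each edge e = (v, w) by f_e(x) = (1/sin(√λ l))(F(v) sin(√λ(l − x)) + F(w) sin(√λ x)). Then f is a nonzero eigenfunction of the Neumann–Kirchhoff quantum graph Hamiltonian with eigenvalue λ. -/
/-! On every edge `f_e` is a combination of `sin (√λ (l - x))` and `sin (√λ x)`, hence solves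
`f'' = -λ f`, and since `sin (√λ l) ≠ 0` it takes the values `F v`, `F w` at the endpoints.
Its slopes there are `κ (F w - cos (√λ l) F v)` and `κ (cos (√λ l) F w - F v)` with
`κ = √λ / sin (√λ l)`, so the Kirchhoff sum at a vertex is `κ` times the defect of the discrete
equation there. As `F ≠ 0` and every vertex lies on an edge, `f` does not vanish. -/

theorem HasDerivAt.csin_ofReal {g : ℝ → ℝ} {g' x : ℝ} (hg : HasDerivAt g g' x) :
    HasDerivAt (fun y => Complex.sin (g y)) (Complex.cos (g x) * g') x :=
  (Complex.hasDerivAt_sin _).comp x hg.ofReal_comp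

theorem HasDerivAt.ccos_ofReal {g : ℝ → ℝ} {g' x : ℝ} (hg : HasDerivAt g g' x) :
    HasDerivAt (fun y => Complex.cos (g y)) (-Complex.sin (g x) * g') x :=
  (Complex.hasDerivAt_cos _).comp x hg.ofReal_comp

noncomputable section

def sineProfile (s l : ℝ) (A B : ℂ) (x : ℝ) : ℂ :=
  ((Real.sin (s * l) : ℝ) : ℂ)⁻¹ *
    (A * Complex.sin ((s * (l - x) : ℝ) : ℂ) + B * Complex.sin ((s * x : ℝ) : ℂ))

def sineProfileDeriv (s l : ℝ) (A B : ℂ) (x : ℝ) : ℂ :=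
  ((Real.sin (s * l) : ℝ) : ℂ)⁻¹ * s *
    (B * Complex.cos ((s * x : ℝ) : ℂ) - A * Complex.cos ((s * (l - x) : ℝ) : ℂ))

end

section SineProfile

variable (s l : ℝ) (A B : ℂ)

theorem hasDerivAt_sineProfile (x : ℝ) :
    HasDerivAt (sineProfile s l A B) (sineProfileDeriv s l A B x) x := by
  have hl : HasDerivAt (fun y => s * (l - y)) (-s) x := by
    simpa using ((hasDerivAt_id x).const_sub l).const_mul s
  have hr : HasDerivAt (fun y => s * y) s x := by simpa using (hasDerivAt_id x).const_mul s
  refine ((((hl.csin_ofReal).const_mul A).add ((hr.csin_ofReal).const_mul B)).const_mul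
    ((Real.sin (s * l) : ℝ) : ℂ)⁻¹).congr_deriv ?_
  simp only [sineProfileDeriv]
  push_cast
  ring

theorem hasDerivAt_sineProfileDeriv (x : ℝ) :
    HasDerivAt (sineProfileDeriv s l A B) (-(s ^ 2 : ℝ) * sineProfile s l A B x) x := by
  have hl : HasDerivAt (fun y => s * (l - y)) (-s) x := by
    simpa using ((hasDerivAt_id x).const_sub l).const_mul s
  have hr : HasDerivAt (fun y => s * y) s x := by simpa using (hasDerivAt_id x).const_mul s
  refine ((((hr.ccos_ofReal).const_mul B).sub ((hl.ccos_ofReal).const_mul A)).const_mul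
    (((Real.sin (s * l) : ℝ) : ℂ)⁻¹ * s)).congr_deriv ?_
  simp only [sineProfile]
  push_cast
  ring

theorem deriv_sineProfile : deriv (sineProfile s l A B) = sineProfileDeriv s l A B :=
  funext fun x => (hasDerivAt_sineProfile s l A B x).deriv

theorem deriv_deriv_sineProfile (x : ℝ) :
    deriv (deriv (sineProfile s l A B)) x = -(s ^ 2 : ℝ) * sineProfile s l A B x := by
  rw [deriv_sineProfile, (hasDerivAt_sineProfileDeriv s l A B x).deriv]

theorem sineProfile_zero (hs : Real.sin (s * l) ≠ 0) : sineProfile s l A B 0 = A := by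
  have hs' : ((Real.sin (s * l) : ℝ) : ℂ) ≠ 0 := Complex.ofReal_ne_zero.mpr hs
  simp only [sineProfile, sub_zero, mul_zero, Complex.ofReal_zero, Complex.sin_zero, add_zero,
    ← Complex.ofReal_sin]
  field_simp

theorem sineProfile_right (hs : Real.sin (s * l) ≠ 0) : sineProfile s l A B l = B := by
  have hs' : ((Real.sin (s * l) : ℝ) : ℂ) ≠ 0 := Complex.ofReal_ne_zero.mpr hs
  simp only [sineProfile, sub_self, mul_zero, Complex.ofReal_zero, Complex.sin_zero, zero_add,
    ← Complex.ofReal_sin]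
  field_simp

theorem sineProfileDeriv_zero :
    sineProfileDeriv s l A B 0 =
      ((Real.sin (s * l) : ℝ) : ℂ)⁻¹ * s * (B - ((Real.cos (s * l) : ℝ) : ℂ) * A) := by
  simp only [sineProfileDeriv, sub_zero, mul_zero, Complex.ofReal_zero, Complex.cos_zero,
    mul_one, ← Complex.ofReal_cos]
  ring

theorem sineProfileDeriv_right :
    sineProfileDeriv s l A B l =
      ((Real.sin (s * l) : ℝ) : ℂ)⁻¹ * s * (((Real.cos (s * l) : ℝ) : ℂ) * B - A) := by
  simp only [sineProfileDeriv, sub_self, mul_zero, Complex.ofReal_zero, Complex.cos_zero,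
    mul_one, ← Complex.ofReal_cos]
  ring

end SineProfile

theorem sum_outgoing_sub_sum_incoming_eq_zero {V E : Type*} [Fintype E] [DecidableEq V]
    (ends : E → V × V) (F : V → ℂ) (κ C : ℂ) (v : V)
    (hv : (∑ e ∈ Finset.univ.filter (fun e => (ends e).1 = v), F (ends e).2)
        + (∑ e ∈ Finset.univ.filter (fun e => (ends e).2 = v), F (ends e).1)
      = ((((Finset.univ.filter (fun e => (ends e).1 = v)).card
            + (Finset.univ.filter (fun e => (ends e).2 = v)).card : ℕ) : ℂ)) * C * F v) :
    (∑ e ∈ Finset.univ.filter (fun e => (ends e).1 = v), κ * (F (ends e).2 - C * F (ends e).1))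
      - (∑ e ∈ Finset.univ.filter (fun e => (ends e).2 = v),
          κ * (C * F (ends e).2 - F (ends e).1)) = 0 := by
  set out := Finset.univ.filter (fun e => (ends e).1 = v)
  set inc := Finset.univ.filter (fun e => (ends e).2 = v)
  have hout : ∑ e ∈ out, κ * (F (ends e).2 - C * F (ends e).1)
      = ∑ e ∈ out, κ * (F (ends e).2 - C * F v) :=
    Finset.sum_congr rfl fun e he => by rw [(Finset.mem_filter.1 he).2]
  have hinc : ∑ e ∈ inc, κ * (C * F (ends e).2 - F (ends e).1)
      = ∑ e ∈ inc, κ * (C * F v - F (ends e).1) :=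
    Finset.sum_congr rfl fun e he => by rw [(Finset.mem_filter.1 he).2]
  rw [hout, hinc]
  simp only [← Finset.mul_sum, Finset.sum_sub_distrib, Finset.sum_const, nsmul_eq_mul]
  push_cast at hv
  linear_combination κ * hv

theorem stmt_12_general {V E : Type*} [Fintype E] [DecidableEq V]
    (ends : E → V × V) (hcover : ∀ v : V, ∃ e, (ends e).1 = v ∨ (ends e).2 = v)
    (l lam : ℝ) (hl : 0 < l) (hlam : 0 < lam)
    (hs : Real.sin (Real.sqrt lam * l) ≠ 0)
    (F : V → ℂ) (hF : F ≠ 0)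
    (hdisc : ∀ v : V,
      (∑ e ∈ Finset.univ.filter (fun e => (ends e).1 = v), F (ends e).2)
        + (∑ e ∈ Finset.univ.filter (fun e => (ends e).2 = v), F (ends e).1)
      = ((((Finset.univ.filter (fun e => (ends e).1 = v)).card
            + (Finset.univ.filter (fun e => (ends e).2 = v)).card : ℕ) : ℂ))
          * ((Real.cos (Real.sqrt lam * l) : ℝ) : ℂ) * F v)
    (f : E → ℝ → ℂ)
    (hf : ∀ e (x : ℝ), f e x = ((Real.sin (Real.sqrt lam * l) : ℝ) : ℂ)⁻¹ *
      (F (ends e).1 * Complex.sin ((Real.sqrt lam * (l - x) : ℝ) : ℂ) +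
       F (ends e).2 * Complex.sin ((Real.sqrt lam * x : ℝ) : ℂ))) :
    (∀ e, ∀ x ∈ Set.Icc (0:ℝ) l, deriv (deriv (f e)) x = -(lam : ℂ) * f e x) ∧
    (∀ e, f e 0 = F (ends e).1 ∧ f e l = F (ends e).2) ∧
    (∀ v : V,
      (∑ e ∈ Finset.univ.filter (fun e => (ends e).1 = v), deriv (f e) 0)
        - (∑ e ∈ Finset.univ.filter (fun e => (ends e).2 = v), deriv (f e) l) = 0) ∧
    (∃ e, ∃ x ∈ Set.Icc (0:ℝ) l, f e x ≠ 0) := by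
  have hfe e : f e = sineProfile (Real.sqrt lam) l (F (ends e).1) (F (ends e).2) := funext (hf e)
  have hends e : f e 0 = F (ends e).1 ∧ f e l = F (ends e).2 := by
    rw [hfe]
    exact ⟨sineProfile_zero _ _ _ _ hs, sineProfile_right _ _ _ _ hs⟩
  refine ⟨fun e x _ => ?_, hends, fun v => ?_, ?_⟩
  · rw [hfe, deriv_deriv_sineProfile, Real.sq_sqrt hlam.le]
  · simp only [hfe, deriv_sineProfile, sineProfileDeriv_zero, sineProfileDeriv_right]
    exact sum_outgoing_sub_sum_incoming_eq_zero ends F _ _ v (hdisc v)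
  · obtain ⟨v, hv⟩ := Function.ne_iff.mp hF
    obtain ⟨e, he | he⟩ := hcover v
    · exact ⟨e, 0, ⟨le_rfl, hl.le⟩, by rwa [(hends e).1, he]⟩
    · exact ⟨e, l, ⟨hl.le, le_rfl⟩, by rwa [(hends e).2, he]⟩

/-- Converse: a nonzero vertex function F satisfying the discrete equation
Σ_{w ~ v} F(w) = d_v cos(√λ l) F(v), extended along edges by the explicit sine formula,
gives a nonzero eigenfunction of the Neumann–Kirchhoff Hamiltonian with eigenvalue λ. -/
theorem stmt_12 {V E : Type*} [Fintype V] [Fintype E] [DecidableEq V]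
    (ends : E → V × V) (hcover : ∀ v : V, ∃ e, (ends e).1 = v ∨ (ends e).2 = v)
    (l lam : ℝ) (hl : 0 < l) (hlam : 0 < lam)
    (hs : Real.sin (Real.sqrt lam * l) ≠ 0)
    (F : V → ℂ) (hF : F ≠ 0)
    (hdisc : ∀ v : V,
      (∑ e ∈ Finset.univ.filter (fun e => (ends e).1 = v), F (ends e).2)
        + (∑ e ∈ Finset.univ.filter (fun e => (ends e).2 = v), F (ends e).1)
      = ((((Finset.univ.filter (fun e => (ends e).1 = v)).card
            + (Finset.univ.filter (fun e => (ends e).2 = v)).card : ℕ) : ℂ))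
          * ((Real.cos (Real.sqrt lam * l) : ℝ) : ℂ) * F v)
    (f : E → ℝ → ℂ)
    (hf : ∀ e (x : ℝ), f e x = ((Real.sin (Real.sqrt lam * l) : ℝ) : ℂ)⁻¹ *
      (F (ends e).1 * Complex.sin ((Real.sqrt lam * (l - x) : ℝ) : ℂ) +
       F (ends e).2 * Complex.sin ((Real.sqrt lam * x : ℝ) : ℂ))) :
    (∀ e, ∀ x ∈ Set.Icc (0:ℝ) l, deriv (deriv (f e)) x = -(lam : ℂ) * f e x) ∧
    (∀ e, f e 0 = F (ends e).1 ∧ f e l = F (ends e).2) ∧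
    (∀ v : V,
      (∑ e ∈ Finset.univ.filter (fun e => (ends e).1 = v), deriv (f e) 0)
        - (∑ e ∈ Finset.univ.filter (fun e => (ends e).2 = v), deriv (f e) l) = 0) ∧
    (∃ e, ∃ x ∈ Set.Icc (0:ℝ) l, f e x ≠ 0) :=
  stmt_12_general ends hcover l lam hl hlam hs F hF hdisc f hf
end
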